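/- arXiv:0709.3448 — 3 statements merged into one kernel-verified Lean document; each statement's English description precedes it below -/
import Mathlib

section
/- Assume A4 (for all k ≥ 0, ‖g_k‖_∞ < ∞ and ‖Φ_k‖_∞ < ∞). Let {A_k} and {Ã_k} be the families of function sets defined recursively by A_{k+1} := { f ∈ L²(X^{k+2}, π_{k+1|k+1}) : R̄_k(·, Φ_{k+1}|f|)·U_k(·, |f|) ∈ L¹(π_{k|k}), U_k(·, |f|) ∈ A_k ∩ L²(π_{k|k}), Φ_{k+1} f² ∈ L¹(π_{k+1|k+1}) } and Ã_{k+1} := { f ∈ L¹(X^{k+2}, π_{k+1|k+1}) : R̄_k(·, Φ_{k+1}|f|)·U_k(·, |f|) ∈ L¹(π_{k|k}), U_k(·, |f|) ∈ Ã_k, [U_k(·, |f|)]² ∈ W̃_k, Φ_{k+1} f² ∈ L¹(π_{k+1|k+1}) }, where W̃_k := { f ∈ L¹(π_{k|k}) : Φ_k f ∈ L¹(π_{k|k}) }, with Ã₀ = A₀ := L²(X, π_{0|0}). Then for all k ≥ 1, A_k = L²(X^{k+1}, π_{k|k}) and L²(X^{k+1}, π_{k|k}) ⊆ Ã_k. 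-/
open MeasureTheory ProbabilityTheory Filter
open scoped ENNReal NNReal Topology

noncomputable section

namespace APF

variable {X : Type*} [MeasurableSpace X]

/-- The path space `X^{k+1}`. -/
abbrev Path (X : Type*) (k : ℕ) := Fin (k + 1) → X

/-- Normalisation of a measure. -/
def normalize {E : Type*} [MeasurableSpace E] (μ : Measure E) : Measure E :=
  (μ Set.univ)⁻¹ • μ

/-- The unnormalised one-step kernel `U_k` from `X^{k+1}` to `X^{k+2}`. -/
def Uker (Q : X → Measure X) (g : ℕ → X → ℝ≥0∞) (k : ℕ) (x : Path X k) :
    Measure (Path X (k + 1)) :=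
  ((Q (x (Fin.last k))).withDensity (g (k + 1))).map (Fin.snoc x)

/-- `Ū_k` as an extended nonnegative real. -/
def UbarE (Q : X → Measure X) (g : ℕ → X → ℝ≥0∞) (k : ℕ) (x : Path X k) : ℝ≥0∞ :=
  Uker Q g k x Set.univ

/-- `Ū_k` as a real number. -/
def Ubar (Q : X → Measure X) (g : ℕ → X → ℝ≥0∞) (k : ℕ) (x : Path X k) : ℝ :=
  (UbarE Q g k x).toReal

/-- `U_k` applied to a real-valued function. -/
def Ufun (Q : X → Measure X) (g : ℕ → X → ℝ≥0∞) (k : ℕ)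
    (f : Path X (k + 1) → ℝ) (x : Path X k) : ℝ :=
  ∫ y, f y ∂(Uker Q g k x)

/-- The joint smoothing distributions `π_{k|k}`. -/
def smooth (ν : Measure X) (Q : X → Measure X) (g : ℕ → X → ℝ≥0∞) :
    (k : ℕ) → Measure (Path X k)
  | 0 => normalize ((ν.withDensity (g 0)).map (fun x (_ : Fin 1) => x))
  | k + 1 => normalize ((smooth ν Q g k).bind (Uker Q g k))

/-- The centring operator `Π_k[f] = f - π_{k|k} f`. -/
def ctr (ν : Measure X) (Q : X → Measure X) (g : ℕ → X → ℝ≥0∞) (k : ℕ)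
    (f : Path X k → ℝ) (x : Path X k) : ℝ :=
  f x - ∫ y, f y ∂(smooth ν Q g k)

/-- The path proposal kernel `R̄_k`. -/
def Rbar (R : ℕ → X → Measure X) (k : ℕ) (x : Path X k) : Measure (Path X (k + 1)) :=
  (R k (x (Fin.last k))).map (Fin.snoc x)

/-- `R̄_k` applied to a real-valued function. -/
def Rfun (R : ℕ → X → Measure X) (k : ℕ) (f : Path X (k + 1) → ℝ) (x : Path X k) : ℝ :=
  ∫ y, f y ∂(Rbar R k x)

/-- The second-stage importance weight function induced by a first-stage
weight function `t` at time `k` (this is `Φ_{k+1}` when `t = Ψ_k`);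
`dQR k x` is the density of `Q x` with respect to `R k x`. -/
def PhiT (g : ℕ → X → ℝ≥0∞) (dQR : ℕ → X → X → ℝ≥0∞) (k : ℕ)
    (t : Path X k → ℝ) (x : Path X (k + 1)) : ℝ :=
  (g (k + 1) (x (Fin.last (k + 1))) *
      dQR k (x ((Fin.last k).castSucc)) (x (Fin.last (k + 1)))).toReal / t (Fin.init x)

/-- The second-stage importance weight function `Φ_{k+1}` induced by the
first-stage weight functions `Ψ`. -/
def Phi (g : ℕ → X → ℝ≥0∞) (dQR : ℕ → X → X → ℝ≥0∞)
    (Ψ : (k : ℕ) → Path X k → ℝ) (k : ℕ) : Path X (k + 1) → ℝ :=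
  PhiT g dQR k (Ψ k)

/-- A proper set of functions. -/
def IsProper {E : Type*} (C : Set (E → ℝ)) : Prop :=
  (∀ f ∈ C, ∀ g ∈ C, f + g ∈ C) ∧
  (∀ c : ℝ, ∀ f ∈ C, c • f ∈ C) ∧
  (∀ c : ℝ, (fun _ => c) ∈ C) ∧
  (∀ g ∈ C, ∀ f : E → ℝ, (∀ x, |f x| ≤ |g x|) → (fun x => |f x|) ∈ C)

/-- Convergence to zero in probability of a triangular array of real
random variables. -/
def TendstoProbZero {α : ℕ → Type*} [∀ N, MeasurableSpace (α N)]
    (P : ∀ N, Measure (α N)) (f : ∀ N, α N → ℝ) : Prop :=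
  ∀ ε : ℝ, 0 < ε → Tendsto (fun N => P N {x | ε ≤ |f N x|}) atTop (𝓝 0)

/-- Convergence in distribution of a triangular array of real random
variables to a centred Gaussian with variance `v`. -/
def TendstoGaussian {α : ℕ → Type*} [∀ N, MeasurableSpace (α N)]
    (P : ∀ N, Measure (α N)) (f : ∀ N, α N → ℝ) (v : ℝ) : Prop :=
  ∀ φ : BoundedContinuousFunction ℝ ℝ,
    Tendsto (fun N => ∫ x, φ (f N x) ∂(P N)) atTop
      (𝓝 (∫ y, φ y ∂(gaussianReal 0 (Real.toNNReal v))))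

/-- The self-normalised estimate `Σ_i ω_i f(ξ_i) / Σ_j ω_j` of a weighted sample. -/
def estW {E : Type*} {n : ℕ} (w : E → ℝ) (f : E → ℝ) (ξ : Fin n → E) : ℝ :=
  (∑ i, w (ξ i) * f (ξ i)) / (∑ i, w (ξ i))

/-- A triangular array of weighted samples is consistent for `(C, μ)`. -/
def Consistent {E : Type*} [MeasurableSpace E] {α : ℕ → Type*}
    [∀ N, MeasurableSpace (α N)] {cnt : ℕ → ℕ}
    (P : ∀ N, Measure (α N)) (ξ : ∀ N, α N → Fin (cnt N) → E) (w : E → ℝ)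
    (C : Set (E → ℝ)) (μ : Measure E) : Prop :=
  (∀ f ∈ C, TendstoProbZero P (fun N x => estW w f (ξ N x) - ∫ e, f e ∂μ)) ∧
  (∀ ε : ℝ, 0 < ε →
    Tendsto (fun N => P N {x | ∃ i, ε ≤ w (ξ N x i) / ∑ j, w (ξ N x j)}) atTop (𝓝 0))

/-- A triangular array of weighted samples is asymptotically normal for
`(μ, A, W, σ, γ, {a_N})`; `vsq` is the squared version `σ²` of `σ`. -/
def AsympNormal {E : Type*} [MeasurableSpace E] {α : ℕ → Type*}
    [∀ N, MeasurableSpace (α N)] {cnt : ℕ → ℕ}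
    (P : ∀ N, Measure (α N)) (ξ : ∀ N, α N → Fin (cnt N) → E) (w : E → ℝ)
    (μ : Measure E) (A W : Set (E → ℝ)) (vsq : (E → ℝ) → ℝ) (γ : (E → ℝ) → ℝ)
    (a : ℕ → ℝ) : Prop :=
  (∀ f ∈ A, TendstoGaussian P (fun N x => a N * (estW w f (ξ N x) - ∫ e, f e ∂μ)) (vsq f)) ∧
  (∀ f ∈ W, TendstoProbZero P (fun N x =>
      (a N) ^ 2 * (∑ i, (w (ξ N x i)) ^ 2 * f (ξ N x i)) / (∑ i, w (ξ N x i)) ^ 2 - γ f)) ∧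
  (∀ ε : ℝ, 0 < ε →
    Tendsto (fun N => P N {x | ∃ i, ε ≤ a N * w (ξ N x i) / ∑ j, w (ξ N x j)}) atTop (𝓝 0))

/-- The (normalised) multinomial selection distribution on indices induced
by the weights `w`. -/
def idxMeasure {n : ℕ} (w : Fin n → ℝ≥0∞) : Measure (Fin n) :=
  normalize (Measure.sum fun j => w j • Measure.dirac j)

/-- One selection/mutation pass: draw `M` ancestor indices i.i.d. multinomially
with probabilities proportional to `w`, and extend each selected path by one
coordinate drawn from the proposal kernel. -/
def selectMutate (R : ℕ → X → Measure X) {N : ℕ} (M : ℕ) (k : ℕ)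
    (w : Fin N → ℝ≥0∞) (p : Fin N → Path X k) : Measure (Fin M → Path X (k + 1)) :=
  (Measure.pi fun _ : Fin M => idxMeasure w).bind fun I =>
    Measure.pi fun i => Rbar R k (p (I i))

/-- Multinomial resampling of `N` particles according to the normalised
weights `w (q i)`. -/
def resample {M : ℕ} (N : ℕ) {E : Type*} [MeasurableSpace E] (w : E → ℝ)
    (q : Fin M → E) : Measure (Fin N → E) :=
  Measure.map (fun (J : Fin N → Fin M) i => q (J i))
    (Measure.pi fun _ : Fin N => idxMeasure fun i => ENNReal.ofReal (w (q i)))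

/-- The law of the particle system produced by the single-stage auxiliary
particle filter (Algorithm 2), with pre-selection weight functions `wfun`. -/
def ssapfLaw (R : ℕ → X → Measure X) (Ψ : (k : ℕ) → Path X k → ℝ)
    (wfun : (k : ℕ) → Path X k → ℝ) {N : ℕ}
    (μ0 : Measure (Fin N → Path X 0)) : (k : ℕ) → Measure (Fin N → Path X k)
  | 0 => μ0
  | k + 1 => (ssapfLaw R Ψ wfun μ0 k).bind fun p =>
      selectMutate R N k (fun j => ENNReal.ofReal (wfun k (p j) * Ψ k (p j))) p

/-- The law of the particle system produced by the two-stage sampling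
particle filter (Algorithm 1), with pre-selection weight functions `wfun`
(after the second-stage resampling all weights are reset to `1`). -/
def tsspfLaw (g : ℕ → X → ℝ≥0∞) (dQR : ℕ → X → X → ℝ≥0∞)
    (R : ℕ → X → Measure X) (Ψ : (k : ℕ) → Path X k → ℝ)
    (wfun : (k : ℕ) → Path X k → ℝ) {N : ℕ} (M : ℕ)
    (μ0 : Measure (Fin N → Path X 0)) : (k : ℕ) → Measure (Fin N → Path X k)
  | 0 => μ0
  | k + 1 => (tsspfLaw g dQR R Ψ wfun M μ0 k).bind fun p =>
      (selectMutate R M k (fun j => ENNReal.ofReal (wfun k (p j) * Ψ k (p j))) p).bind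
        fun q => resample N (Phi g dQR Ψ k) q

/-- The sets `A_k` of Theorem 3.1 (TSSPF central limit theorem). -/
def AsetTSS (ν : Measure X) (Q : X → Measure X) (g : ℕ → X → ℝ≥0∞)
    (R : ℕ → X → Measure X) (dQR : ℕ → X → X → ℝ≥0∞)
    (Ψ : (k : ℕ) → Path X k → ℝ) (A0 : Set (Path X 0 → ℝ)) :
    (k : ℕ) → Set (Path X k → ℝ)
  | 0 => A0
  | k + 1 =>
    { f | MemLp f 2 (smooth ν Q g (k + 1)) ∧
        MemLp (fun x => Rfun R k (fun y => Phi g dQR Ψ k y * |f y|) x *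
          Ufun Q g k (fun y => |f y|) x) 1 (smooth ν Q g k) ∧
        (fun x => Ufun Q g k (fun y => |f y|) x) ∈ AsetTSS ν Q g R dQR Ψ A0 k ∧
        MemLp (fun x => Ufun Q g k (fun y => |f y|) x) 2 (smooth ν Q g k) ∧
        MemLp (fun y => Phi g dQR Ψ k y * (f y) ^ 2) 1 (smooth ν Q g (k + 1)) }

/-- The asymptotic variance functionals `σ²_k` of the TSSPF central limit
theorem. -/
def sigsqTSS (ν : Measure X) (Q : X → Measure X) (g : ℕ → X → ℝ≥0∞)
    (R : ℕ → X → Measure X) (dQR : ℕ → X → X → ℝ≥0∞)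
    (Ψ : (k : ℕ) → Path X k → ℝ) (σ0sq : (Path X 0 → ℝ) → ℝ) (β : ℝ) :
    (k : ℕ) → (Path X k → ℝ) → ℝ
  | 0 => σ0sq
  | k + 1 => fun f =>
      (∫ y, (ctr ν Q g (k + 1) f y) ^ 2 ∂(smooth ν Q g (k + 1))) +
      ((sigsqTSS ν Q g R dQR Ψ σ0sq β k
          (fun x => Ufun Q g k (ctr ν Q g (k + 1) f) x)) +
        β * ((∫ x, Ψ k x * Rfun R k
              (fun y => (Phi g dQR Ψ k y) ^ 2 * (ctr ν Q g (k + 1) f y) ^ 2) x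
              ∂(smooth ν Q g k)) *
            (∫ x, Ψ k x ∂(smooth ν Q g k)))) /
        (∫ x, Ubar Q g k x ∂(smooth ν Q g k)) ^ 2

/-- The sets `W̃_k` of Theorem 3.2 (SSAPF central limit theorem). -/
def WtSS (ν : Measure X) (Q : X → Measure X) (g : ℕ → X → ℝ≥0∞)
    (dQR : ℕ → X → X → ℝ≥0∞) (Ψ : (k : ℕ) → Path X k → ℝ)
    (W0 : Set (Path X 0 → ℝ)) : (k : ℕ) → Set (Path X k → ℝ)
  | 0 => W0
  | k + 1 =>
    { f | MemLp f 1 (smooth ν Q g (k + 1)) ∧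
        MemLp (fun y => Phi g dQR Ψ k y * f y) 1 (smooth ν Q g (k + 1)) }

/-- The sets `Ã_k` of Theorem 3.2 (SSAPF central limit theorem). -/
def AsetSS (ν : Measure X) (Q : X → Measure X) (g : ℕ → X → ℝ≥0∞)
    (R : ℕ → X → Measure X) (dQR : ℕ → X → X → ℝ≥0∞)
    (Ψ : (k : ℕ) → Path X k → ℝ) (A0 W0 : Set (Path X 0 → ℝ)) :
    (k : ℕ) → Set (Path X k → ℝ)
  | 0 => A0
  | k + 1 =>
    { f | MemLp f 1 (smooth ν Q g (k + 1)) ∧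
        MemLp (fun x => Rfun R k (fun y => Phi g dQR Ψ k y * |f y|) x *
          Ufun Q g k (fun y => |f y|) x) 1 (smooth ν Q g k) ∧
        (fun x => Ufun Q g k (fun y => |f y|) x) ∈ AsetSS ν Q g R dQR Ψ A0 W0 k ∧
        (fun x => (Ufun Q g k (fun y => |f y|) x) ^ 2) ∈ WtSS ν Q g dQR Ψ W0 k ∧
        MemLp (fun y => Phi g dQR Ψ k y * (f y) ^ 2) 1 (smooth ν Q g (k + 1)) }

/-- The asymptotic variance functionals `σ̃²_k` of the SSAPF central limit
theorem. -/
def sigsqSS (ν : Measure X) (Q : X → Measure X) (g : ℕ → X → ℝ≥0∞)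
    (R : ℕ → X → Measure X) (dQR : ℕ → X → X → ℝ≥0∞)
    (Ψ : (k : ℕ) → Path X k → ℝ) (σ0sq : (Path X 0 → ℝ) → ℝ) :
    (k : ℕ) → (Path X k → ℝ) → ℝ
  | 0 => σ0sq
  | k + 1 => fun f =>
      ((sigsqSS ν Q g R dQR Ψ σ0sq k
          (fun x => Ufun Q g k (ctr ν Q g (k + 1) f) x)) +
        (∫ x, Ψ k x * Rfun R k
            (fun y => (Phi g dQR Ψ k y) ^ 2 * (ctr ν Q g (k + 1) f y) ^ 2) x
            ∂(smooth ν Q g k)) *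
          (∫ x, Ψ k x ∂(smooth ν Q g k))) /
        (∫ x, Ubar Q g k x ∂(smooth ν Q g k)) ^ 2

/-- The functionals `γ̃_k` of the SSAPF central limit theorem. -/
def gamSS (ν : Measure X) (Q : X → Measure X) (g : ℕ → X → ℝ≥0∞)
    (dQR : ℕ → X → X → ℝ≥0∞) (Ψ : (k : ℕ) → Path X k → ℝ)
    (γ0 : (Path X 0 → ℝ) → ℝ) : (k : ℕ) → (Path X k → ℝ) → ℝ
  | 0 => γ0
  | k + 1 => fun f =>
      (∫ y, Phi g dQR Ψ k y * f y ∂(smooth ν Q g (k + 1))) *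
        (∫ x, Ψ k x ∂(smooth ν Q g k)) / (∫ x, Ubar Q g k x ∂(smooth ν Q g k))

/-- The weight functions carried by the SSAPF samples: weight `1` at time `0`
(as in assumption A2) and `Φ_k` at time `k ≥ 1`. -/
def ssWeight (g : ℕ → X → ℝ≥0∞) (dQR : ℕ → X → X → ℝ≥0∞)
    (Ψ : (k : ℕ) → Path X k → ℝ) : (k : ℕ) → Path X k → ℝ
  | 0 => fun _ => 1
  | k + 1 => Phi g dQR Ψ k

end APF

/-! Proof idea: induction on `k`. Since `π_{k+1|k+1}` is proportional to `π_{k|k} U_k`, the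
Cauchy–Schwarz inequality `(U_k|f|)² ≤ U_k(·, X^{k+2}) · U_k f²` together with
`π_{k|k}(U_k f²) ∝ π_{k+1|k+1}(f²)` and `‖g_{k+1}‖_∞ < ∞` puts `U_k|f|` in `L²(π_{k|k})` for every
`f ∈ L²(π_{k+1|k+1})`. By the definition of `Φ_{k+1}`, `U_k(x, ·) = Ψ_k(x) Φ_{k+1} R̄_k(x, ·)`, so
`R̄_k(Φ_{k+1}|f|) = U_k|f| / Ψ_k` and `U_k(x, X^{k+2}) ≤ ‖Φ_{k+1}‖_∞ Ψ_k(x)`; hence the product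
`R̄_k(Φ_{k+1}|f|) · U_k|f| = (U_k|f|)² / Ψ_k` is dominated by `‖Φ_{k+1}‖_∞ U_k f²`. All remaining
conditions only ask for bounded weights times integrable functions to be integrable. -/

section KernelCauchySchwarz

variable {α β : Type*} [MeasurableSpace α] [MeasurableSpace β]

theorem lintegral_sq_le_measure_univ_mul (μ : Measure β) {a : β → ℝ≥0∞}
    (ha : AEMeasurable a μ) : (∫⁻ y, a y ∂μ) ^ 2 ≤ μ Set.univ * ∫⁻ y, a y ^ 2 ∂μ := by
  have h := ENNReal.lintegral_mul_le_Lp_mul_Lq μ Real.HolderConjugate.two_two ha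
    (aemeasurable_const (b := (1 : ℝ≥0∞)))
  simp only [Pi.mul_apply, mul_one, ENNReal.rpow_two] at h
  calc (∫⁻ y, a y ∂μ) ^ 2
      ≤ ((∫⁻ y, a y ^ 2 ∂μ) ^ (2⁻¹ : ℝ) * μ Set.univ ^ (2⁻¹ : ℝ)) ^ 2 := by
        gcongr; simpa using h
    _ = μ Set.univ * ∫⁻ y, a y ^ 2 ∂μ := by
        rw [← ENNReal.mul_rpow_of_nonneg _ _ (by norm_num), ← ENNReal.rpow_two,
          ← ENNReal.rpow_mul]
        norm_num [mul_comm]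

theorem integrable_sq_integral_abs_div_of_comp {κ : Kernel α β} [IsSFiniteKernel κ]
    {μ : Measure α} {f : β → ℝ} (hf : MemLp f 2 (κ ∘ₘ μ)) {w : α → ℝ} (hw : Measurable w)
    (hw0 : ∀ x, 0 < w x) {C : ℝ≥0∞} (hC : C ≠ ∞)
    (hκ : ∀ x, κ x Set.univ ≤ C * ENNReal.ofReal (w x)) :
    Integrable (fun x => (∫ y, |f y| ∂κ x) ^ 2 / w x) μ := by
  obtain ⟨f', hf'm, hff'⟩ := hf.aestronglyMeasurable
  have hcongr : (fun x => (∫ y, |f' y| ∂κ x) ^ 2 / w x) =ᵐ[μ]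
      fun x => (∫ y, |f y| ∂κ x) ^ 2 / w x := by
    filter_upwards [Measure.ae_ae_of_ae_comp hff'] with x (hx : f =ᵐ[κ x] f')
    have h : ∫ y, |f y| ∂κ x = ∫ y, |f' y| ∂κ x := integral_congr_ae (hx.fun_comp abs)
    rw [h]
  refine Integrable.congr ?_ hcongr
  set I : α → ℝ≥0∞ := fun x => ∫⁻ y, ‖f' y‖ₑ ^ 2 ∂κ x
  have hI : ∫⁻ x, I x ∂μ < ∞ := by
    have h := ((memLp_congr_ae hff').mp hf).integrable_sq.hasFiniteIntegral
    simp only [hasFiniteIntegral_iff_enorm, enorm_pow] at h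
    rw [Measure.lintegral_bind κ.measurable.aemeasurable
      (hf'm.measurable.enorm.pow_const 2).aemeasurable] at h
    exact h
  have hbound : ∀ x, ‖(∫ y, |f' y| ∂κ x) ^ 2 / w x‖ₑ ≤ C * I x := by
    intro x
    have hw0' : ENNReal.ofReal (w x) ≠ 0 := (ENNReal.ofReal_pos.mpr (hw0 x)).ne'
    calc ‖(∫ y, |f' y| ∂κ x) ^ 2 / w x‖ₑ
        = ‖∫ y, |f' y| ∂κ x‖ₑ ^ 2 / ENNReal.ofReal (w x) := by
          rw [Real.enorm_of_nonneg (div_nonneg (sq_nonneg _) (hw0 x).le),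
            ENNReal.ofReal_div_of_pos (hw0 x),
            ENNReal.ofReal_pow (integral_nonneg fun _ => abs_nonneg _),
            Real.enorm_of_nonneg (integral_nonneg fun _ => abs_nonneg _)]
      _ ≤ (∫⁻ y, ‖f' y‖ₑ ∂κ x) ^ 2 / ENNReal.ofReal (w x) := by
          gcongr
          exact (enorm_integral_le_lintegral_enorm _).trans_eq (by simp)
      _ ≤ κ x Set.univ * I x / ENNReal.ofReal (w x) := by
          gcongr
          exact lintegral_sq_le_measure_univ_mul _ hf'm.measurable.enorm.aemeasurable
      _ ≤ C * ENNReal.ofReal (w x) * I x / ENNReal.ofReal (w x) := by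
          gcongr
          exact hκ x
      _ = C * I x := by
          rw [mul_right_comm, ENNReal.mul_div_cancel_right hw0' ENNReal.ofReal_ne_top]
  have hm : StronglyMeasurable fun x => (∫ y, |f' y| ∂κ x) ^ 2 / w x :=
    (hf'm.measurable.abs.stronglyMeasurable.integral_kernel.pow 2).div hw.stronglyMeasurable
  refine ⟨hm.aestronglyMeasurable, ?_⟩
  rw [hasFiniteIntegral_iff_enorm]
  calc ∫⁻ x, ‖(∫ y, |f' y| ∂κ x) ^ 2 / w x‖ₑ ∂μ
      ≤ ∫⁻ x, C * I x ∂μ := lintegral_mono hbound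
    _ = C * ∫⁻ x, I x ∂μ := lintegral_const_mul' _ _ hC
    _ < ∞ := ENNReal.mul_lt_top hC.lt_top hI

theorem memLp_two_integral_abs_of_comp {κ : Kernel α β} [IsFiniteKernel κ] {μ : Measure α}
    {f : β → ℝ} (hf : MemLp f 2 (κ ∘ₘ μ)) : MemLp (fun x => ∫ y, |f y| ∂κ x) 2 μ := by
  have h := integrable_sq_integral_abs_div_of_comp hf measurable_const (fun _ => one_pos)
    κ.bound_ne_top fun x => by simpa using κ.measure_le_bound x Set.univ
  simp only [div_one] at h
  have hm : AEStronglyMeasurable (fun x => ∫ y, |f y| ∂κ x) μ := by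
    rw [Measure.comp_eq_comp_const_apply] at hf
    simpa using hf.aestronglyMeasurable.norm.integral_kernel_comp
  exact (memLp_two_iff_integrable_sq hm).mpr h

end KernelCauchySchwarz

theorem memLp_one_mul_of_abs_le {α : Type*} [MeasurableSpace α] {μ : Measure α} {φ h : α → ℝ}
    (hh : MemLp h 1 μ) (hφ : AEStronglyMeasurable φ μ) {c : ℝ} (hc : ∀ x, |φ x| ≤ c) :
    MemLp (fun x => φ x * h x) 1 μ :=
  memLp_one_iff_integrable.mpr <| (memLp_one_iff_integrable.mp hh).bdd_mul hφ <|
    .of_forall fun x => (Real.norm_eq_abs _).trans_le (hc x)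

namespace APF

lemma phi_snoc {X : Type*} (g : ℕ → X → ℝ≥0∞) (dQR : ℕ → X → X → ℝ≥0∞)
    (Ψ : (k : ℕ) → Path X k → ℝ) {k : ℕ} (x : Path X k) (z : X) :
    Phi g dQR Ψ k (Fin.snoc x z) = (g (k + 1) z * dQR k (x (Fin.last k)) z).toReal / Ψ k x := by
  simp [Phi, PhiT]

-- No hypothesis on the mass: `normalize μ = 0` when `μ Set.univ` is `0` or `∞`.
lemma isFiniteMeasure_normalize {E : Type*} [MeasurableSpace E] (μ : Measure E) :
    IsFiniteMeasure (normalize μ) :=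
  ⟨by simpa [normalize] using (ENNReal.inv_mul_le_one (μ Set.univ)).trans_lt ENNReal.one_lt_top⟩

lemma memLp_of_memLp_normalize {E : Type*} [MeasurableSpace E] {μ : Measure E} {f : E → ℝ}
    {p : ℝ≥0∞} (h0 : μ Set.univ ≠ 0) (htop : μ Set.univ ≠ ∞) (hf : MemLp f p (normalize μ)) :
    MemLp f p μ :=
  hf.of_measure_le_smul htop <| by
    rw [normalize, smul_smul, ENNReal.mul_inv_cancel h0 htop, one_smul]

variable {X : Type*} [MeasurableSpace X]

lemma measurable_snoc {k : ℕ} :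
    Measurable fun p : Path X k × X => (Fin.snoc p.1 p.2 : Path X (k + 1)) := by
  refine measurable_pi_iff.mpr fun i => ?_
  induction i using Fin.lastCases with
  | last => simpa using measurable_snd
  | cast j => simpa [Function.comp_def] using (measurable_pi_apply j).comp measurable_fst

lemma measurable_snoc_right {k : ℕ} (x : Path X k) :
    Measurable fun z : X => (Fin.snoc x z : Path X (k + 1)) :=
  measurable_snoc.comp (measurable_const.prodMk measurable_id)

lemma measurable_phi {g : ℕ → X → ℝ≥0∞} {dQR : ℕ → X → X → ℝ≥0∞} {Ψ : (k : ℕ) → Path X k → ℝ}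
    {k : ℕ} (hg : Measurable (g (k + 1))) (hd : Measurable (Function.uncurry (dQR k)))
    (hΨ : Measurable (Ψ k)) : Measurable (Phi g dQR Ψ k) := by
  unfold Phi PhiT
  exact ((hg.comp (measurable_pi_apply _)).mul
    (hd.comp ((measurable_pi_apply _).prodMk (measurable_pi_apply _)))).ennreal_toReal.div
    (hΨ.comp (measurable_pi_lambda (Fin.init : Path X (k + 1) → Path X k)
      fun i => measurable_pi_apply i.castSucc))

lemma exists_isFiniteKernel_coe_eq_uker {Q : X → Measure X} (hQm : Measurable Q)
    (hQp : ∀ x, IsProbabilityMeasure (Q x)) {g : ℕ → X → ℝ≥0∞} {k : ℕ}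
    (hg : Measurable (g (k + 1))) {c : ℝ≥0∞} (hc : c ≠ ∞) (hgc : ∀ z, g (k + 1) z ≤ c) :
    ∃ κ : Kernel (Path X k) (Path X (k + 1)), IsFiniteKernel κ ∧ ⇑κ = Uker Q g k := by
  let base : Kernel (Path X k) X :=
    ⟨fun x => Q (x (Fin.last k)), hQm.comp (measurable_pi_apply _)⟩
  have : IsMarkovKernel base := ⟨fun _ => hQp _⟩
  have := Kernel.isFiniteKernel_withDensity_of_bounded base hc fun _ z => hgc z
  refine ⟨Kernel.map (Kernel.deterministic id measurable_id ×ₖ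
      base.withDensity fun _ z => g (k + 1) z) fun p => Fin.snoc p.1 p.2,
    inferInstance, funext fun x => ?_⟩
  have hg' : Measurable (Function.uncurry fun (_ : Path X k) z => g (k + 1) z) :=
    hg.comp measurable_snd
  rw [Kernel.map_apply _ measurable_snoc, Kernel.prod_apply, Kernel.deterministic_apply,
    Kernel.withDensity_apply _ hg', id, Measure.dirac_prod,
    Measure.map_map measurable_snoc measurable_prodMk_left]
  rfl

lemma uker_eq_smul_withDensity_phi {Q : X → Measure X} {g : ℕ → X → ℝ≥0∞}
    {R : ℕ → X → Measure X} {dQR : ℕ → X → X → ℝ≥0∞} {Ψ : (k : ℕ) → Path X k → ℝ} {k : ℕ}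
    (hg : Measurable (g (k + 1))) (hg_ne_top : ∀ z, g (k + 1) z ≠ ∞)
    (hd : Measurable (Function.uncurry (dQR k))) (hΨm : Measurable (Ψ k)) (x : Path X k)
    (hΨ : 0 < Ψ k x) [IsFiniteMeasure (Q (x (Fin.last k)))]
    (hQR : Q (x (Fin.last k)) = (R k (x (Fin.last k))).withDensity (dQR k (x (Fin.last k)))) :
    Uker Q g k x = ENNReal.ofReal (Ψ k x) •
      (Rbar R k x).withDensity fun y => ENNReal.ofReal (Phi g dQR Ψ k y) := by
  set d := dQR k (x (Fin.last k))
  have hdm : Measurable d := hd.comp measurable_prodMk_left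
  have hsnoc := measurable_snoc_right x
  -- `Φ` is built with `toReal`, which is faithful where `g · dQ/dR < ∞`, i.e. `R`-a.e.
  have hd_lt_top : ∀ᵐ z ∂(R k (x (Fin.last k))), d z < ∞ := by
    refine ae_lt_top hdm ?_
    rw [← setLIntegral_univ, ← withDensity_apply _ MeasurableSet.univ, ← hQR]
    exact measure_ne_top _ _
  ext s hs
  rw [Measure.smul_apply, smul_eq_mul, withDensity_apply _ hs, Rbar,
    setLIntegral_map hs (measurable_phi hg hd hΨm).ennreal_ofReal hsnoc,
    ← lintegral_const_mul' _ _ ENNReal.ofReal_ne_top, Uker,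
    Measure.map_apply hsnoc hs, withDensity_apply _ (hsnoc hs), hQR,
    setLIntegral_withDensity_eq_setLIntegral_mul _ hdm hg (hsnoc hs)]
  refine setLIntegral_congr_fun_ae (hsnoc hs) ?_
  filter_upwards [hd_lt_top] with z hz _
  rw [phi_snoc, ← ENNReal.ofReal_mul hΨ.le, mul_div_cancel₀ _ hΨ.ne',
    ENNReal.ofReal_toReal (ENNReal.mul_ne_top (hg_ne_top z) hz.ne), Pi.mul_apply, mul_comm]

section Factorisation

variable {Q : X → Measure X} {g : ℕ → X → ℝ≥0∞} {R : ℕ → X → Measure X}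
  {dQR : ℕ → X → X → ℝ≥0∞} {Ψ : (k : ℕ) → Path X k → ℝ} {k : ℕ} {x : Path X k}

lemma ufun_eq_mul_rfun_phi_mul (hΦ : Measurable (Phi g dQR Ψ k))
    (hΦ0 : ∀ y, 0 ≤ Phi g dQR Ψ k y) (hΨ : 0 ≤ Ψ k x)
    (hU : Uker Q g k x = ENNReal.ofReal (Ψ k x) •
      (Rbar R k x).withDensity fun y => ENNReal.ofReal (Phi g dQR Ψ k y))
    (h : Path X (k + 1) → ℝ) :
    Ufun Q g k h x = Ψ k x * Rfun R k (fun y => Phi g dQR Ψ k y * h y) x := by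
  rw [Ufun, hU, integral_smul_measure, ENNReal.toReal_ofReal hΨ, smul_eq_mul, Rfun]
  congr 1
  exact (integral_withDensity_eq_integral_smul hΦ.real_toNNReal h).trans
    (integral_congr_ae (.of_forall fun y => by simp [NNReal.smul_def, hΦ0 y]))

lemma uker_univ_le (hU : Uker Q g k x = ENNReal.ofReal (Ψ k x) •
      (Rbar R k x).withDensity fun y => ENNReal.ofReal (Phi g dQR Ψ k y))
    [IsProbabilityMeasure (Rbar R k x)] {C : ℝ} (hC : ∀ y, Phi g dQR Ψ k y ≤ C) :
    Uker Q g k x Set.univ ≤ ENNReal.ofReal C * ENNReal.ofReal (Ψ k x) := by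
  rw [hU, Measure.smul_apply, withDensity_apply _ MeasurableSet.univ, setLIntegral_univ,
    smul_eq_mul, mul_comm]
  gcongr
  calc ∫⁻ y, ENNReal.ofReal (Phi g dQR Ψ k y) ∂(Rbar R k x)
      ≤ ∫⁻ _, ENNReal.ofReal C ∂(Rbar R k x) := lintegral_mono fun y => by gcongr; exact hC y
    _ = ENNReal.ofReal C := by simp

end Factorisation

instance (ν : Measure X) (Q : X → Measure X) (g : ℕ → X → ℝ≥0∞) (k : ℕ) :
    IsFiniteMeasure (smooth ν Q g (k + 1)) :=
  isFiniteMeasure_normalize _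

section Step

variable {ν : Measure X} {Q : X → Measure X} {g : ℕ → X → ℝ≥0∞} {R : ℕ → X → Measure X}
  {dQR : ℕ → X → X → ℝ≥0∞} {Ψ : (k : ℕ) → Path X k → ℝ} {k : ℕ} {f : Path X (k + 1) → ℝ}

lemma memLp_comp_of_memLp_smooth_succ {κ : Kernel (Path X k) (Path X (k + 1))}
    (hκ : ⇑κ = Uker Q g k)
    (hU : 0 < ∫⁻ x, UbarE Q g k x ∂(smooth ν Q g k) ∧
      ∫⁻ x, UbarE Q g k x ∂(smooth ν Q g k) < ∞)
    {p : ℝ≥0∞} (hf : MemLp f p (smooth ν Q g (k + 1))) : MemLp f p (κ ∘ₘ smooth ν Q g k) := by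
  have hmass : (κ ∘ₘ smooth ν Q g k) Set.univ = ∫⁻ x, UbarE Q g k x ∂(smooth ν Q g k) := by
    rw [Measure.bind_apply MeasurableSet.univ κ.aemeasurable, hκ]
    rfl
  rw [hκ] at hmass ⊢
  exact memLp_of_memLp_normalize (hmass ▸ hU.1.ne') (hmass ▸ hU.2.ne) hf

lemma memLp_ufun_abs (hQm : Measurable Q) (hQp : ∀ x, IsProbabilityMeasure (Q x))
    (hg : Measurable (g (k + 1))) (hgb : ∃ c : ℝ, ∀ z, g (k + 1) z ≤ ENNReal.ofReal c)
    (hU : 0 < ∫⁻ x, UbarE Q g k x ∂(smooth ν Q g k) ∧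
      ∫⁻ x, UbarE Q g k x ∂(smooth ν Q g k) < ∞)
    (hf : MemLp f 2 (smooth ν Q g (k + 1))) :
    MemLp (fun x => Ufun Q g k (fun y => |f y|) x) 2 (smooth ν Q g k) := by
  obtain ⟨c, hc⟩ := hgb
  obtain ⟨κ, _, hκ⟩ := exists_isFiniteKernel_coe_eq_uker hQm hQp hg ENNReal.ofReal_ne_top hc
  simpa only [Ufun, ← hκ] using
    memLp_two_integral_abs_of_comp (memLp_comp_of_memLp_smooth_succ hκ hU hf)

lemma memLp_rfun_phi_mul_abs_mul_ufun_abs (hQm : Measurable Q)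
    (hQp : ∀ x, IsProbabilityMeasure (Q x)) (hg : Measurable (g (k + 1)))
    (hgb : ∃ c : ℝ, ∀ z, g (k + 1) z ≤ ENNReal.ofReal c)
    (hRp : ∀ x, IsProbabilityMeasure (R k x)) (hd : Measurable (Function.uncurry (dQR k)))
    (hQR : ∀ x, Q x = (R k x).withDensity (dQR k x))
    (hΨm : Measurable (Ψ k)) (hΨpos : ∀ x, 0 < Ψ k x)
    (hU : 0 < ∫⁻ x, UbarE Q g k x ∂(smooth ν Q g k) ∧
      ∫⁻ x, UbarE Q g k x ∂(smooth ν Q g k) < ∞)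
    (hΦb : ∃ C : ℝ, ∀ y, |Phi g dQR Ψ k y| ≤ C) (hf : MemLp f 2 (smooth ν Q g (k + 1))) :
    MemLp (fun x => Rfun R k (fun y => Phi g dQR Ψ k y * |f y|) x *
      Ufun Q g k (fun y => |f y|) x) 1 (smooth ν Q g k) := by
  obtain ⟨c, hc⟩ := hgb
  obtain ⟨C, hC⟩ := hΦb
  obtain ⟨κ, _, hκ⟩ := exists_isFiniteKernel_coe_eq_uker hQm hQp hg ENNReal.ofReal_ne_top hc
  have hfact : ∀ x, Uker Q g k x = ENNReal.ofReal (Ψ k x) •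
      (Rbar R k x).withDensity fun y => ENNReal.ofReal (Phi g dQR Ψ k y) := fun x =>
    uker_eq_smul_withDensity_phi hg (fun z => ((hc z).trans_lt ENNReal.ofReal_lt_top).ne) hd
      hΨm x (hΨpos x) (hQR _)
  have hmass : ∀ x, κ x Set.univ ≤ ENNReal.ofReal C * ENNReal.ofReal (Ψ k x) := fun x => by
    have : IsProbabilityMeasure (Rbar R k x) :=
      Measure.isProbabilityMeasure_map (measurable_snoc_right x).aemeasurable
    rw [hκ]
    exact uker_univ_le (hfact x) fun y => (le_abs_self _).trans (hC y)
  refine memLp_one_iff_integrable.mpr <| (integrable_sq_integral_abs_div_of_comp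
    (memLp_comp_of_memLp_smooth_succ hκ hU hf) hΨm hΨpos ENNReal.ofReal_ne_top hmass).congr
    (.of_forall fun x => ?_)
  have hUR := ufun_eq_mul_rfun_phi_mul (measurable_phi hg hd hΨm)
    (fun y => div_nonneg ENNReal.toReal_nonneg (hΨpos _).le) (hΨpos x).le (hfact x)
    fun y => |f y|
  rw [hκ]
  change Ufun Q g k (fun y => |f y|) x ^ 2 / Ψ k x =
    Rfun R k (fun y => Phi g dQR Ψ k y * |f y|) x * Ufun Q g k (fun y => |f y|) x
  rw [hUR]
  field_simp

end Step

lemma mem_WtSS_of_memLp_one {X : Type*} [MeasurableSpace X] {ν : Measure X}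
    {Q : X → Measure X} {g : ℕ → X → ℝ≥0∞} {dQR : ℕ → X → X → ℝ≥0∞}
    {Ψ : (k : ℕ) → Path X k → ℝ} {dνς : X → ℝ≥0∞} (hg : ∀ j, Measurable (g j))
    (hdνςm : Measurable dνς) (hdm : ∀ j, Measurable (Function.uncurry (dQR j)))
    (hΨm : ∀ j, Measurable (Ψ j))
    (hΦ0bdd : ∃ c : ℝ, ∀ x : Path X 0, |(g 0 (x 0) * dνς (x 0)).toReal| ≤ c)
    (hΦbdd : ∀ j, ∃ c : ℝ, ∀ x, |Phi g dQR Ψ j x| ≤ c)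
    {k : ℕ} {h : Path X k → ℝ} (hh : MemLp h 1 (smooth ν Q g k)) :
    h ∈ WtSS ν Q g dQR Ψ {f | MemLp f 1 (smooth ν Q g 0) ∧
      MemLp (fun x => (g 0 (x 0) * dνς (x 0)).toReal * f x) 1 (smooth ν Q g 0)} k := by
  cases k with
  | zero =>
    obtain ⟨c, hc⟩ := hΦ0bdd
    exact ⟨hh, memLp_one_mul_of_abs_le hh (((hg 0).comp (measurable_pi_apply 0)).mul
      (hdνςm.comp (measurable_pi_apply 0))).ennreal_toReal.aestronglyMeasurable hc⟩
  | succ j =>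
    obtain ⟨c, hc⟩ := hΦbdd j
    exact ⟨hh, memLp_one_mul_of_abs_le hh
      (measurable_phi (hg _) (hdm j) (hΨm j)).aestronglyMeasurable hc⟩

end APF

namespace APF

theorem Aset_eq_L2_general
    {X : Type*} [MeasurableSpace X]
    (ν : Measure X)
    (dνς : X → ℝ≥0∞) (hdνςm : Measurable dνς)
    (Q : X → Measure X) (hQm : Measurable Q) (hQp : ∀ x, IsProbabilityMeasure (Q x))
    (g : ℕ → X → ℝ≥0∞) (hg : ∀ j, Measurable (g j))
    (R : ℕ → X → Measure X)
    (hRp : ∀ j x, IsProbabilityMeasure (R j x))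
    (dQR : ℕ → X → X → ℝ≥0∞) (hdm : ∀ j, Measurable (Function.uncurry (dQR j)))
    (habs : ∀ j x, Q x = (R j x).withDensity (dQR j x))
    (Ψ : (j : ℕ) → Path X j → ℝ) (hΨm : ∀ j, Measurable (Ψ j))
    (hΨpos : ∀ j x, 0 < Ψ j x)
    (hU : ∀ j, 0 < ∫⁻ x, UbarE Q g j x ∂(smooth ν Q g j) ∧
      ∫⁻ x, UbarE Q g j x ∂(smooth ν Q g j) < ∞)
    -- A4: `‖g_k‖_∞ < ∞` and `‖Φ_k‖_∞ < ∞` for all `k ≥ 0`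
    (hgbdd : ∀ j, ∃ c : ℝ, ∀ z, g j z ≤ ENNReal.ofReal c)
    (hΦ0bdd : ∃ c : ℝ, ∀ x : Path X 0, |(g 0 (x 0) * dνς (x 0)).toReal| ≤ c)
    (hΦbdd : ∀ j, ∃ c : ℝ, ∀ x, |Phi g dQR Ψ j x| ≤ c) :
    ∀ k : ℕ, 1 ≤ k →
      (AsetTSS ν Q g R dQR Ψ {f | MemLp f 2 (smooth ν Q g 0)} k =
        {f | MemLp f 2 (smooth ν Q g k)}) ∧
      ({f | MemLp f 2 (smooth ν Q g k)} ⊆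
        AsetSS ν Q g R dQR Ψ {f | MemLp f 2 (smooth ν Q g 0)}
          {f | MemLp f 1 (smooth ν Q g 0) ∧
            MemLp (fun x => (g 0 (x 0) * dνς (x 0)).toReal * f x) 1 (smooth ν Q g 0)} k) := by
  suffices ∀ k : ℕ, _ ∧ _ from fun k _ => this k
  intro k
  induction k with
  | zero => exact ⟨rfl, fun _ hf => hf⟩
  | succ k ih =>
    obtain ⟨C, hC⟩ := hΦbdd k
    have hstep : ∀ f : Path X (k + 1) → ℝ, MemLp f 2 (smooth ν Q g (k + 1)) →
        MemLp (fun x => Ufun Q g k (fun y => |f y|) x) 2 (smooth ν Q g k) ∧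
        MemLp (fun x => Rfun R k (fun y => Phi g dQR Ψ k y * |f y|) x *
          Ufun Q g k (fun y => |f y|) x) 1 (smooth ν Q g k) ∧
        MemLp (fun y => Phi g dQR Ψ k y * f y ^ 2) 1 (smooth ν Q g (k + 1)) := fun f hf =>
      ⟨memLp_ufun_abs hQm hQp (hg _) (hgbdd _) (hU k) hf,
        memLp_rfun_phi_mul_abs_mul_ufun_abs hQm hQp (hg _) (hgbdd _) (hRp k) (hdm k) (habs k)
          (hΨm k) (hΨpos k) (hU k) (hΦbdd k) hf,
        memLp_one_mul_of_abs_le (memLp_one_iff_integrable.mpr hf.integrable_sq)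
          (measurable_phi (hg _) (hdm k) (hΨm k)).aestronglyMeasurable hC⟩
    refine ⟨Set.Subset.antisymm (fun f hf => hf.1) fun f hf => ?_, fun f hf => ?_⟩
    · obtain ⟨hU2, hRU, hΦf⟩ := hstep f hf
      exact ⟨hf, hRU, ih.1.ge hU2, hU2, hΦf⟩
    · obtain ⟨hU2, hRU, hΦf⟩ := hstep f hf
      exact ⟨hf.mono_exponent one_le_two, hRU, ih.2 hU2, mem_WtSS_of_memLp_one hg hdνςm hdm hΨm
        hΦ0bdd hΦbdd (memLp_one_iff_integrable.mpr hU2.integrable_sq), hΦf⟩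

/-- **Corollary: under A4 the CLT function classes are the full `L²` spaces.**
With `Ã₀ = A₀ := L²(X, π_{0|0})`, for all `k ≥ 1` one has
`A_k = L²(X^{k+1}, π_{k|k})` and `L²(X^{k+1}, π_{k|k}) ⊆ Ã_k`. -/
theorem Aset_eq_L2
    {X : Type*} [MeasurableSpace X]
    (ν ς : Measure X) [IsProbabilityMeasure ν] [IsProbabilityMeasure ς]
    (dνς : X → ℝ≥0∞) (hdνςm : Measurable dνς) (hνς : ν = ς.withDensity dνς)
    (Q : X → Measure X) (hQm : Measurable Q) (hQp : ∀ x, IsProbabilityMeasure (Q x))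
    (g : ℕ → X → ℝ≥0∞) (hg : ∀ j, Measurable (g j))
    (R : ℕ → X → Measure X) (hRm : ∀ j, Measurable (R j))
    (hRp : ∀ j x, IsProbabilityMeasure (R j x))
    (dQR : ℕ → X → X → ℝ≥0∞) (hdm : ∀ j, Measurable (Function.uncurry (dQR j)))
    (habs : ∀ j x, Q x = (R j x).withDensity (dQR j x))
    (Ψ : (j : ℕ) → Path X j → ℝ) (hΨm : ∀ j, Measurable (Ψ j))
    (hΨpos : ∀ j x, 0 < Ψ j x)
    -- non-degeneracy of the smoothing recursion
    (hg0 : 0 < ∫⁻ z, g 0 z ∂ν ∧ ∫⁻ z, g 0 z ∂ν < ∞)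
    (hU : ∀ j, 0 < ∫⁻ x, UbarE Q g j x ∂(smooth ν Q g j) ∧
      ∫⁻ x, UbarE Q g j x ∂(smooth ν Q g j) < ∞)
    -- A4: `‖g_k‖_∞ < ∞` and `‖Φ_k‖_∞ < ∞` for all `k ≥ 0`
    (hgbdd : ∀ j, ∃ c : ℝ, ∀ z, g j z ≤ ENNReal.ofReal c)
    (hΦ0bdd : ∃ c : ℝ, ∀ x : Path X 0, |(g 0 (x 0) * dνς (x 0)).toReal| ≤ c)
    (hΦbdd : ∀ j, ∃ c : ℝ, ∀ x, |Phi g dQR Ψ j x| ≤ c) :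
    ∀ k : ℕ, 1 ≤ k →
      (AsetTSS ν Q g R dQR Ψ {f | MemLp f 2 (smooth ν Q g 0)} k =
        {f | MemLp f 2 (smooth ν Q g k)}) ∧
      ({f | MemLp f 2 (smooth ν Q g k)} ⊆
        AsetSS ν Q g R dQR Ψ {f | MemLp f 2 (smooth ν Q g 0)}
          {f | MemLp f 1 (smooth ν Q g 0) ∧
            MemLp (fun x => (g 0 (x 0) * dνς (x 0)).toReal * f x) 1 (smooth ν Q g 0)} k) :=
  Aset_eq_L2_general ν dνς hdνςm Q hQm hQp g hg R hRp dQR hdm habs Ψ hΨm hΨpos hU hgbdd hΦ0bdd hΦbdd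

end APF
end
end

section
/- (Correctness of the APF second-stage weights.) Let (X, 𝒳) be a measurable space with measurable singletons, let ξ^1, …, ξ^N ∈ X^{k+1} be points with pairwise distinct first k+1-coordinate blocks, and let ω^1, …, ω^N and τ^1, …, τ^N be positive reals. Let Q and R be Markov kernels on X with Q(x,·) ≪ R(x,·) for all x, let g : X → [0,∞) be measurable, set U(x_{0:k}, A) := ∫_A g(x'_{k+1}) δ_{x_{0:k}}(dx'_{0:k}) Q(x'_k, dx'_{k+1}), Ū(x_{0:k}) := U(x_{0:k}, X^{k+2}), P(x_{0:k}, ·) := U(x_{0:k}, ·)/Ū(x_{0:k}), and let R̄(x_{0:k}, ·) extend the path by a draw from R(x_k, ·). Assume Ū(ξ^i) ∈ (0, ∞) for all i. Define the target Φ̄(A) := Σ_{i=1}^N [ω^i Ū(ξ^i) / Σ_{j} ω^j Ū(ξ^j)] P(ξ^i, A) and the proposal ρ(A) := Σ_{i=1}^N [ω^i τ^i / Σ_{j} ω^j τ^j] R̄(ξ^i, A). Then Φ̄ ≪ ρ and, ρ-almost everywhere, dΦ̄/dρ(x_{0:k+1}) = c · Σ_{i=1}^N 1{x_{0:k} = ξ^i}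 · g(x_{k+1}) [dQ(x_k,·)/dR(x_k,·)](x_{k+1}) / τ^i, with normalising constant c = Σ_j ω^j τ^j / Σ_j ω^j Ū(ξ^j). -/
open MeasureTheory ProbabilityTheory Filter
open scoped ENNReal NNReal Topology

noncomputable section

/-! The proposal component `R̄(ξ^i, ·)` lives on the fibre `{x_{0:k} = ξ^i}`, and these fibres
are disjoint because the `ξ^i` are distinct, so a density of `Φ̄` with respect to `ρ` can be
chosen fibre by fibre. On the fibre of `ξ^i`, writing `Q = (dQ/dR) · R` shows that
`U(ξ^i, ·)` has density `g(x_{k+1}) (dQ/dR)(x_k, x_{k+1})` with respect to `R̄(ξ^i, ·)`; the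
mixture weights `ω^i Ū(ξ^i) / Σ_j ω^j Ū(ξ^j)` of `Φ̄` and `ω^i τ^i / Σ_j ω^j τ^j` of `ρ`
then leave exactly the factor `c / τ^i`. -/

namespace APF

open scoped Classical

theorem withDensity_map_eq_map_withDensity {α β : Type*} [MeasurableSpace α]
    [MeasurableSpace β] (μ : Measure α) {e : α → β} (he : Measurable e) {f : β → ℝ≥0∞}
    (hf : Measurable f) :
    (μ.map e).withDensity f = (μ.withDensity (f ∘ e)).map e := by
  ext s hs
  rw [withDensity_apply _ hs, Measure.map_apply he hs, withDensity_apply _ (he hs),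
    setLIntegral_map hs hf he]
  rfl

theorem measurable_snoc_s11 {α : Type*} [MeasurableSpace α] {n : ℕ} (x : Fin n → α) :
    Measurable (Fin.snoc (α := fun _ => α) x) := by
  refine measurable_pi_lambda _ fun a => ?_
  cases a using Fin.lastCases with
  | last => simpa only [Fin.snoc_last] using measurable_id'
  | cast b => simpa only [Fin.snoc_castSucc] using measurable_const

theorem measurable_init {α : Type*} [MeasurableSpace α] {n : ℕ} :
    Measurable (Fin.init : (Fin (n + 1) → α) → Fin n → α) :=
  measurable_pi_lambda _ fun _ => measurable_pi_apply _

theorem sum_smul_eq_withDensity_sum_smul {α ι : Type*} [MeasurableSpace α] [Countable ι]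
    {μ ν : ι → Measure α} {a b : ι → ℝ≥0∞} {F : α → ℝ≥0∞}
    (h : ∀ i, a i • μ i = b i • (ν i).withDensity F) :
    Measure.sum (fun i => a i • μ i) = (Measure.sum fun i => b i • ν i).withDensity F := by
  simp only [withDensity_sum, withDensity_smul_measure, h]

theorem withDensity_Rbar_eq_smul_Uker {X : Type*} [MeasurableSpace X] {Q : X → Measure X}
    {R : ℕ → X → Measure X} {g : ℕ → X → ℝ≥0∞} {k : ℕ} {x : Path X k} {d : X → ℝ≥0∞}
    (hQ : Q (x (Fin.last k)) = (R k (x (Fin.last k))).withDensity d) (hd : Measurable d)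
    (hg : Measurable (g (k + 1))) {F : Path X (k + 1) → ℝ≥0∞} (hF : Measurable F)
    {c : ℝ≥0∞} (hFx : ∀ y, F (Fin.snoc x y) = c * (d y * g (k + 1) y)) :
    (Rbar R k x).withDensity F = c • Uker Q g k x := by
  have hFx' : F ∘ Fin.snoc (α := fun _ => X) x = c • (d * g (k + 1)) := funext hFx
  rw [Rbar, withDensity_map_eq_map_withDensity _ (measurable_snoc_s11 x) hF, hFx',
    withDensity_smul _ (hd.mul hg), withDensity_mul _ hd hg, ← hQ, Measure.map_smul, Uker]

theorem _root_.ENNReal.mul_div_mul_inv_eq {w u t S T : ℝ≥0∞} (hu0 : u ≠ 0) (hu : u ≠ ∞)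
    (ht0 : t ≠ 0) (ht : t ≠ ∞) (hS0 : S ≠ 0) (hS : S ≠ ∞) :
    w * u / T * u⁻¹ = w * t / S * (S / T * t⁻¹) := by
  have hu' := ENNReal.mul_inv_cancel hu0 hu
  have ht' := ENNReal.mul_inv_cancel ht0 ht
  have hS' := ENNReal.mul_inv_cancel hS0 hS
  calc w * u / T * u⁻¹ = w / T * (u * u⁻¹) := by simp only [div_eq_mul_inv]; ring
    _ = w / T * (t * t⁻¹) * (S * S⁻¹) := by rw [hu', ht', hS', mul_one, mul_one]
    _ = w * t / S * (S / T * t⁻¹) := by simp only [div_eq_mul_inv]; ring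

theorem apf_second_stage_weights_correct_general
    {X : Type*} [MeasurableSpace X] [MeasurableSingletonClass X]
    (k N : ℕ) (ξ : Fin N → Path X k) (hξ : Function.Injective ξ)
    (ω τ : Fin N → ℝ) (hω : ∀ i, 0 < ω i) (hτ : ∀ i, 0 < τ i)
    (Q R : X → Measure X)
    (dQR : X → X → ℝ≥0∞) (hdm : Measurable (Function.uncurry dQR))
    (habs : ∀ x, Q x = (R x).withDensity (dQR x))
    (g : X → ℝ≥0∞) (hg : Measurable g)
    (hU : ∀ i, UbarE Q (fun _ => g) k (ξ i) ≠ 0 ∧ UbarE Q (fun _ => g) k (ξ i) ≠ ∞) :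
    (Measure.sum fun i =>
        (ENNReal.ofReal (ω i) * UbarE Q (fun _ => g) k (ξ i) /
            ∑ j, ENNReal.ofReal (ω j) * UbarE Q (fun _ => g) k (ξ j)) •
          ((UbarE Q (fun _ => g) k (ξ i))⁻¹ • Uker Q (fun _ => g) k (ξ i)))
      ≪ (Measure.sum fun i =>
        (ENNReal.ofReal (ω i * τ i) / ∑ j, ENNReal.ofReal (ω j * τ j)) •
          Rbar (fun _ => R) k (ξ i)) ∧
    (Measure.sum fun i =>
        (ENNReal.ofReal (ω i) * UbarE Q (fun _ => g) k (ξ i) /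
            ∑ j, ENNReal.ofReal (ω j) * UbarE Q (fun _ => g) k (ξ j)) •
          ((UbarE Q (fun _ => g) k (ξ i))⁻¹ • Uker Q (fun _ => g) k (ξ i)))
      = (Measure.sum fun i =>
          (ENNReal.ofReal (ω i * τ i) / ∑ j, ENNReal.ofReal (ω j * τ j)) •
            Rbar (fun _ => R) k (ξ i)).withDensity
        (fun x =>
          ((∑ j, ENNReal.ofReal (ω j * τ j)) /
              ∑ j, ENNReal.ofReal (ω j) * UbarE Q (fun _ => g) k (ξ j)) *
            ∑ i, (if Fin.init x = ξ i then
              g (x (Fin.last (k + 1))) *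
                dQR (x ((Fin.last k).castSucc)) (x (Fin.last (k + 1))) /
                ENNReal.ofReal (τ i)
              else 0)) := by
  set SU := ∑ j, ENNReal.ofReal (ω j) * UbarE Q (fun _ => g) k (ξ j)
  set Sτ := ∑ j, ENNReal.ofReal (ω j * τ j)
  have hSτ0 (i : Fin N) : Sτ ≠ 0 := fun h =>
    (ENNReal.ofReal_pos.mpr (mul_pos (hω i) (hτ i))).ne'
      (Finset.sum_eq_zero_iff.mp h i (Finset.mem_univ _))
  have hSτ : Sτ ≠ ∞ := ENNReal.sum_ne_top.mpr fun _ _ => ENNReal.ofReal_ne_top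
  have hτ0 (i : Fin N) : ENNReal.ofReal (τ i) ≠ 0 := (ENNReal.ofReal_pos.mpr (hτ i)).ne'
  refine (and_iff_right_of_imp fun h => ?_).mpr (sum_smul_eq_withDensity_sum_smul fun i => ?_)
  · rw [h]
    exact withDensity_absolutelyContinuous _ _
  rw [withDensity_Rbar_eq_smul_Uker (R := fun _ => R) (g := fun _ => g) (x := ξ i)
    (c := Sτ / SU * (ENNReal.ofReal (τ i))⁻¹) (habs _) (hdm.comp measurable_prodMk_left) hg ?_ ?_,
    smul_smul, smul_smul, ENNReal.ofReal_mul (hω i).le,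
    ENNReal.mul_div_mul_inv_eq (hU i).1 (hU i).2 (hτ0 i) ENNReal.ofReal_ne_top (hSτ0 i) hSτ]
  · refine measurable_const.mul (Finset.measurable_sum _ fun j _ => ?_)
    refine Measurable.ite (measurable_init (measurableSet_singleton (ξ j))) ?_ measurable_const
    exact ((hg.comp (measurable_pi_apply _)).mul
      (hdm.comp (f := fun x : Path X (k + 1) => (x (Fin.last k).castSucc, x (Fin.last (k + 1))))
        (by fun_prop))).div_const _
  · intro y
    simp only [Fin.init_snoc, Fin.snoc_last, Fin.snoc_castSucc, hξ.eq_iff, Finset.sum_ite_eq,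
      Finset.mem_univ, if_true, div_eq_mul_inv]
    ring

/-- **Correctness of the APF second-stage weights.**  Given a weighted sample
`{(ξ^i, ω^i)}` with pairwise distinct particle locations, first-stage weights
`τ^i` and proposal kernel `R`, the one-step plug-in Bayes update
`Φ̄ = Σ_i [ω^i Ū(ξ^i)/Σ_j ω^j Ū(ξ^j)] P(ξ^i, ·)` is absolutely continuous
with respect to the auxiliary proposal
`ρ = Σ_i [ω^i τ^i/Σ_j ω^j τ^j] R̄(ξ^i, ·)`, with density
`dΦ̄/dρ(x_{0:k+1}) = c · Σ_i 1{x_{0:k} = ξ^i} g(x_{k+1}) (dQ(x_k,·)/dR(x_k,·))(x_{k+1})/τ^i`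
where `c = Σ_j ω^j τ^j / Σ_j ω^j Ū(ξ^j)`. -/
theorem apf_second_stage_weights_correct
    {X : Type*} [MeasurableSpace X] [MeasurableSingletonClass X]
    (k N : ℕ) (hN : 1 ≤ N) (ξ : Fin N → Path X k) (hξ : Function.Injective ξ)
    (ω τ : Fin N → ℝ) (hω : ∀ i, 0 < ω i) (hτ : ∀ i, 0 < τ i)
    (Q R : X → Measure X) (hQm : Measurable Q) (hRm : Measurable R)
    (hQp : ∀ x, IsProbabilityMeasure (Q x)) (hRp : ∀ x, IsProbabilityMeasure (R x))
    (dQR : X → X → ℝ≥0∞) (hdm : Measurable (Function.uncurry dQR))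
    (habs : ∀ x, Q x = (R x).withDensity (dQR x))
    (g : X → ℝ≥0∞) (hg : Measurable g)
    (hU : ∀ i, UbarE Q (fun _ => g) k (ξ i) ≠ 0 ∧ UbarE Q (fun _ => g) k (ξ i) ≠ ∞) :
    (Measure.sum fun i =>
        (ENNReal.ofReal (ω i) * UbarE Q (fun _ => g) k (ξ i) /
            ∑ j, ENNReal.ofReal (ω j) * UbarE Q (fun _ => g) k (ξ j)) •
          ((UbarE Q (fun _ => g) k (ξ i))⁻¹ • Uker Q (fun _ => g) k (ξ i)))
      ≪ (Measure.sum fun i =>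
        (ENNReal.ofReal (ω i * τ i) / ∑ j, ENNReal.ofReal (ω j * τ j)) •
          Rbar (fun _ => R) k (ξ i)) ∧
    (Measure.sum fun i =>
        (ENNReal.ofReal (ω i) * UbarE Q (fun _ => g) k (ξ i) /
            ∑ j, ENNReal.ofReal (ω j) * UbarE Q (fun _ => g) k (ξ j)) •
          ((UbarE Q (fun _ => g) k (ξ i))⁻¹ • Uker Q (fun _ => g) k (ξ i)))
      = (Measure.sum fun i =>
          (ENNReal.ofReal (ω i * τ i) / ∑ j, ENNReal.ofReal (ω j * τ j)) •
            Rbar (fun _ => R) k (ξ i)).withDensity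
        (fun x =>
          ((∑ j, ENNReal.ofReal (ω j * τ j)) /
              ∑ j, ENNReal.ofReal (ω j) * UbarE Q (fun _ => g) k (ξ j)) *
            ∑ i, (if Fin.init x = ξ i then
              g (x (Fin.last (k + 1))) *
                dQR (x ((Fin.last k).castSucc)) (x (Fin.last (k + 1))) /
                ENNReal.ofReal (τ i)
              else 0)) :=
  apf_second_stage_weights_correct_general k N ξ hξ ω τ hω hτ Q R dQR hdm habs g hg hU

end APF
end
end

section
/- (One-step target identity for the first-stage reweighting.) Let π be a probability measure on X^{k+1}, Ψ : X^{k+1} → (0,∞) measurable with 0 < πΨ < ∞, and let μ be the probability measure with dμ/dπ = Ψ/πΨ. Let Q and R be Markov kernels on X with Q(x,·) ≪ R(x,·) for all x, g : X → [0,∞) measurable, U(x_{0:k}, A) := ∫_A g(x'_{k+1}) δ_{x_{0:k}}(dx'_{0:k}) Q(x'_k, dx'_{k+1}), Ū := U(·, X^{k+2}), let R̄(x_{0:k}, ·) extend the path by a draw from R(x_k, ·), and let Φ(x_{0:k+1}) := g(x_{k+1}) [dQ(x_k,·)/dR(x_k,·)](x_{k+1}) / Ψ(x_{0:k}). Assume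 0 < πŪ < ∞. Then for every measurable A ⊆ X^{k+2}: μ R̄(Φ 1_A) / μ R̄ Φ = π U(A) / π Ū; in particular, if π = π_{k|k} then this common value is π_{k+1|k+1}(A). -/
open MeasureTheory ProbabilityTheory Filter
open scoped ENNReal NNReal Topology

noncomputable section

/-! Since `dQR k` is the density of `Q` with respect to `R k`, proposing from a path `x`
through `R̄` and reweighting by `Φ = g · dQR / Ψ` yields exactly `U(x, ·) / Ψ(x)`. Mixing over
`μ ∝ Ψ π` then cancels `Ψ`: `μ R̄ (Φ 1_·) = π U / π Ψ`, and the constant `1 / π Ψ` drops out of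
the ratio. -/

theorem Measurable.finSnoc {α : Type*} [MeasurableSpace α] {n : ℕ} {A : Fin (n + 1) → Type*}
    [∀ i, MeasurableSpace (A i)] {f : α → ∀ j : Fin n, A j.castSucc} {g : α → A (Fin.last n)}
    (hf : Measurable f) (hg : Measurable g) : Measurable fun a => Fin.snoc (f a) (g a) :=
  measurable_pi_lambda _ fun j =>
    Fin.lastCases (by simpa) (fun i => by simpa using hf.eval) j

theorem Measurable.smul_measure_of_measurable {α β : Type*} [MeasurableSpace α]
    [MeasurableSpace β] {f : α → ℝ≥0∞} (hf : Measurable f) {κ : α → Measure β}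
    (hκ : Measurable κ) : Measurable fun x => f x • κ x :=
  Measure.measurable_of_measurable_coe _ fun s hs => by
    simp only [Measure.smul_apply, smul_eq_mul]
    exact hf.mul ((Measure.measurable_coe hs).comp hκ)

theorem ProbabilityTheory.Kernel.measurable_map_withDensity {α β γ : Type*}
    [MeasurableSpace α] [MeasurableSpace β] [MeasurableSpace γ] (κ : Kernel α β)
    [IsSFiniteKernel κ] {w : α × β → ℝ≥0∞} (hw : Measurable w) {f : α × β → γ}
    (hf : Measurable f) :
    Measurable fun a => ((κ a).withDensity fun b => w (a, b)).map fun b => f (a, b) :=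
  Measure.measurable_of_measurable_coe _ fun s hs => by
    have hfa : ∀ a, Measurable fun b => f (a, b) := fun a => hf.comp measurable_prodMk_left
    have h : ∀ a, (((κ a).withDensity fun b => w (a, b)).map fun b => f (a, b)) s =
        ∫⁻ b, (f ⁻¹' s).indicator w (a, b) ∂κ a := fun a => by
      rw [Measure.map_apply (hfa a) hs, withDensity_apply _ (hfa a hs),
        ← lintegral_indicator (hfa a hs)]
      rfl
    simpa only [h] using (hw.indicator (hf hs)).lintegral_kernel_prod_right'

namespace MeasureTheory.Measure

variable {α β : Type*} [MeasurableSpace α] [MeasurableSpace β]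

theorem withDensity_map_eq_map_withDensity (μ : Measure α) {φ : α → β} (hφ : Measurable φ)
    {w : β → ℝ≥0∞} (hw : Measurable w) :
    (μ.map φ).withDensity w = (μ.withDensity (w ∘ φ)).map φ := by
  ext s hs
  rw [withDensity_apply _ hs, restrict_map hφ hs, lintegral_map hw hφ, map_apply hφ hs,
    withDensity_apply _ (hφ hs)]
  rfl

theorem bind_withDensity_inv_smul (μ : Measure α) {f : α → ℝ≥0∞} (hf : Measurable f)
    (hf0 : ∀ᵐ x ∂μ, f x ≠ 0) (hftop : ∀ᵐ x ∂μ, f x ≠ ∞) {κ : α → Measure β}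
    (hκ : Measurable κ) :
    (μ.withDensity f).bind (fun x => (f x)⁻¹ • κ x) = μ.bind κ := by
  have hκ' : Measurable fun x => (f x)⁻¹ • κ x := hf.inv.smul_measure_of_measurable hκ
  ext s hs
  rw [bind_apply hs hκ'.aemeasurable, bind_apply hs hκ.aemeasurable,
    lintegral_withDensity_eq_lintegral_mul _ hf (measurable_measure.mp hκ' s hs)]
  refine lintegral_congr_ae ((hf0.and hftop).mono fun x ⟨hx0, hxtop⟩ => ?_)
  simp only [Pi.mul_apply, smul_apply, smul_eq_mul, ← mul_assoc,
    ENNReal.mul_inv_cancel hx0 hxtop, one_mul]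

end MeasureTheory.Measure

namespace APF

section

variable {X : Type*} {k : ℕ}

/-- `ℝ≥0∞`-valued version of `PhiT`, the density of the second-stage reweighting. It is an
`abbrev` so that `rw` recognises it in the unfolded form in which the main theorem is stated. -/
abbrev PhiE (g : ℕ → X → ℝ≥0∞) (dQR : ℕ → X → X → ℝ≥0∞) (k : ℕ) (t : Path X k → ℝ≥0∞)
    (y : Path X (k + 1)) : ℝ≥0∞ :=
  g (k + 1) (y (Fin.last (k + 1))) * dQR k (y (Fin.last k).castSucc) (y (Fin.last (k + 1))) /
    t (Fin.init y)

theorem phiE_comp_snoc (g : ℕ → X → ℝ≥0∞) (dQR : ℕ → X → X → ℝ≥0∞) (t : Path X k → ℝ≥0∞)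
    (x : Path X k) :
    PhiE g dQR k t ∘ Fin.snoc x = (t x)⁻¹ • (dQR k (x (Fin.last k)) * g (k + 1)) := by
  ext z
  simp only [Function.comp_apply, PhiE, Fin.snoc_last, Fin.snoc_castSucc, Fin.init_snoc,
    Pi.smul_apply, Pi.mul_apply, smul_eq_mul]
  rw [ENNReal.div_eq_inv_mul, mul_comm (g (k + 1) z)]

variable [MeasurableSpace X]

theorem measurable_uker {Q : X → Measure X} (hQm : Measurable Q)
    (hQp : ∀ x, IsProbabilityMeasure (Q x)) {g : ℕ → X → ℝ≥0∞} (hg : Measurable (g (k + 1))) :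
    Measurable (Uker Q g k) := by
  let κQ : Kernel (Path X k) X := ⟨fun x => Q (x (Fin.last k)), hQm.comp (measurable_pi_apply _)⟩
  have : IsMarkovKernel κQ := ⟨fun x => hQp _⟩
  have hsnoc : Measurable fun p : Path X k × X => (Fin.snoc p.1 p.2 : Path X (k + 1)) :=
    measurable_fst.finSnoc measurable_snd
  exact κQ.measurable_map_withDensity (w := fun p => g (k + 1) p.2) (hg.comp measurable_snd) hsnoc

theorem measurable_phiE {g : ℕ → X → ℝ≥0∞} (hg : Measurable (g (k + 1)))
    {dQR : ℕ → X → X → ℝ≥0∞} (hdm : Measurable (Function.uncurry (dQR k)))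
    {t : Path X k → ℝ≥0∞} (ht : Measurable t) : Measurable (PhiE g dQR k t) := by
  have hinit : Measurable fun y : Path X (k + 1) => Fin.init y :=
    measurable_pi_lambda _ fun i => measurable_pi_apply _
  exact ((hg.comp (measurable_pi_apply _)).mul
    (hdm.comp ((measurable_pi_apply _).prodMk (measurable_pi_apply _)))).div (ht.comp hinit)

theorem withDensity_rbar_phiE {Q : X → Measure X} {g : ℕ → X → ℝ≥0∞}
    (hg : Measurable (g (k + 1))) {R : ℕ → X → Measure X} {dQR : ℕ → X → X → ℝ≥0∞}
    (hdm : Measurable (Function.uncurry (dQR k))) (habs : ∀ x, Q x = (R k x).withDensity (dQR k x))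
    {t : Path X k → ℝ≥0∞} (ht : Measurable t) (x : Path X k) :
    (Rbar R k x).withDensity (PhiE g dQR k t) = (t x)⁻¹ • Uker Q g k x := by
  have hd : Measurable (dQR k (x (Fin.last k))) := hdm.comp measurable_prodMk_left
  rw [Rbar, Measure.withDensity_map_eq_map_withDensity (φ := Fin.snoc x) _
      (measurable_const.finSnoc measurable_id) (measurable_phiE hg hdm ht),
    phiE_comp_snoc, withDensity_smul _ (hd.mul hg), withDensity_mul _ hd hg, ← habs,
    Measure.map_smul, Uker]

theorem bind_normalize_rbar_phiE {Q : X → Measure X} (hQm : Measurable Q)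
    (hQp : ∀ x, IsProbabilityMeasure (Q x)) {g : ℕ → X → ℝ≥0∞} (hg : Measurable (g (k + 1)))
    {R : ℕ → X → Measure X} {dQR : ℕ → X → X → ℝ≥0∞}
    (hdm : Measurable (Function.uncurry (dQR k))) (habs : ∀ x, Q x = (R k x).withDensity (dQR k x))
    (π : Measure (Path X k)) {t : Path X k → ℝ≥0∞} (ht : Measurable t)
    (ht0 : ∀ᵐ x ∂π, t x ≠ 0) (httop : ∀ᵐ x ∂π, t x ≠ ∞) :
    (normalize (π.withDensity t)).bind (fun x => (Rbar R k x).withDensity (PhiE g dQR k t)) =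
      (∫⁻ x, t x ∂π)⁻¹ • π.bind (Uker Q g k) := by
  simp_rw [withDensity_rbar_phiE hg hdm habs ht]
  rw [normalize, Measure.bind_smul, withDensity_apply _ .univ, setLIntegral_univ,
    Measure.bind_withDensity_inv_smul π ht ht0 httop (measurable_uker hQm hQp hg)]

end

theorem one_step_target_identity_general
    {X : Type*} [MeasurableSpace X] (k : ℕ)
    (ν : Measure X)
    (Q : X → Measure X) (hQm : Measurable Q) (hQp : ∀ x, IsProbabilityMeasure (Q x))
    (g : ℕ → X → ℝ≥0∞) (hg : ∀ j, Measurable (g j))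
    (R : ℕ → X → Measure X)
    (dQR : ℕ → X → X → ℝ≥0∞) (hdm : ∀ j, Measurable (Function.uncurry (dQR j)))
    (habs : ∀ j x, Q x = (R j x).withDensity (dQR j x))
    (π : Measure (Path X k))
    (Ψ : Path X k → ℝ) (hΨm : Measurable Ψ) (hΨpos : ∀ x, 0 < Ψ x)
    (hΨint : 0 < ∫⁻ x, ENNReal.ofReal (Ψ x) ∂π ∧ ∫⁻ x, ENNReal.ofReal (Ψ x) ∂π < ∞) :
    ∀ A : Set (Path X (k + 1)), MeasurableSet A →
      ((normalize (π.withDensity fun x => ENNReal.ofReal (Ψ x))).bind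
          (fun x => (Rbar R k x).withDensity fun y =>
            g (k + 1) (y (Fin.last (k + 1))) *
              dQR k (y ((Fin.last k).castSucc)) (y (Fin.last (k + 1))) /
              ENNReal.ofReal (Ψ (Fin.init y)))) A /
        ((normalize (π.withDensity fun x => ENNReal.ofReal (Ψ x))).bind
          (fun x => (Rbar R k x).withDensity fun y =>
            g (k + 1) (y (Fin.last (k + 1))) *
              dQR k (y ((Fin.last k).castSucc)) (y (Fin.last (k + 1))) /
              ENNReal.ofReal (Ψ (Fin.init y)))) Set.univ =
        (π.bind (Uker Q g k)) A / (π.bind (Uker Q g k)) Set.univ ∧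
      (π = smooth ν Q g k →
        (π.bind (Uker Q g k)) A / (π.bind (Uker Q g k)) Set.univ =
          smooth ν Q g (k + 1) A) := by
  intro A _
  refine ⟨?_, fun hπ => ?_⟩
  · rw [bind_normalize_rbar_phiE hQm hQp (hg _) (hdm k) (habs k) π
      (t := fun x => ENNReal.ofReal (Ψ x)) (ENNReal.measurable_ofReal.comp hΨm)
      (ae_of_all _ fun x => (ENNReal.ofReal_pos.mpr (hΨpos x)).ne')
      (ae_of_all _ fun _ => ENNReal.ofReal_ne_top)]
    simp only [Measure.smul_apply, smul_eq_mul]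
    exact ENNReal.mul_div_mul_left _ _ (ENNReal.inv_ne_zero.mpr hΨint.2.ne)
      (ENNReal.inv_ne_top.mpr hΨint.1.ne')
  · rw [hπ, smooth, normalize, Measure.smul_apply, smul_eq_mul, ENNReal.div_eq_inv_mul]

/-- **One-step target identity for the first-stage reweighting.**  Reweighting
`π` by an arbitrary positive first-stage weight function `Ψ` (giving
`dμ/dπ = Ψ/πΨ`), proposing through `R` and reweighting by the induced
second-stage weight `Φ` leaves the one-step Bayes update of `π` invariant:
for every measurable `A ⊆ X^{k+2}`, `μR̄(Φ1_A)/μR̄Φ = πU(A)/πŪ`; in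
particular, if `π = π_{k|k}` this common value is `π_{k+1|k+1}(A)`. -/
theorem one_step_target_identity
    {X : Type*} [MeasurableSpace X] (k : ℕ)
    (ν : Measure X) [IsProbabilityMeasure ν]
    (Q : X → Measure X) (hQm : Measurable Q) (hQp : ∀ x, IsProbabilityMeasure (Q x))
    (g : ℕ → X → ℝ≥0∞) (hg : ∀ j, Measurable (g j))
    (R : ℕ → X → Measure X) (hRm : ∀ j, Measurable (R j))
    (hRp : ∀ j x, IsProbabilityMeasure (R j x))
    (dQR : ℕ → X → X → ℝ≥0∞) (hdm : ∀ j, Measurable (Function.uncurry (dQR j)))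
    (habs : ∀ j x, Q x = (R j x).withDensity (dQR j x))
    (π : Measure (Path X k)) [IsProbabilityMeasure π]
    (Ψ : Path X k → ℝ) (hΨm : Measurable Ψ) (hΨpos : ∀ x, 0 < Ψ x)
    (hΨint : 0 < ∫⁻ x, ENNReal.ofReal (Ψ x) ∂π ∧ ∫⁻ x, ENNReal.ofReal (Ψ x) ∂π < ∞)
    (hUint : 0 < (π.bind (Uker Q g k)) Set.univ ∧ (π.bind (Uker Q g k)) Set.univ < ∞) :
    ∀ A : Set (Path X (k + 1)), MeasurableSet A →
      ((normalize (π.withDensity fun x => ENNReal.ofReal (Ψ x))).bind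
          (fun x => (Rbar R k x).withDensity fun y =>
            g (k + 1) (y (Fin.last (k + 1))) *
              dQR k (y ((Fin.last k).castSucc)) (y (Fin.last (k + 1))) /
              ENNReal.ofReal (Ψ (Fin.init y)))) A /
        ((normalize (π.withDensity fun x => ENNReal.ofReal (Ψ x))).bind
          (fun x => (Rbar R k x).withDensity fun y =>
            g (k + 1) (y (Fin.last (k + 1))) *
              dQR k (y ((Fin.last k).castSucc)) (y (Fin.last (k + 1))) /
              ENNReal.ofReal (Ψ (Fin.init y)))) Set.univ =
        (π.bind (Uker Q g k)) A / (π.bind (Uker Q g k)) Set.univ ∧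
      (π = smooth ν Q g k →
        (π.bind (Uker Q g k)) A / (π.bind (Uker Q g k)) Set.univ =
          smooth ν Q g (k + 1) A) :=
  one_step_target_identity_general k ν Q hQm hQp g hg R dQR hdm habs π Ψ hΨm hΨpos hΨint

end APF
end
end
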